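/- arXiv:0707.3528 — 5 statements merged into one kernel-verified Lean document; each statement's English description precedes it below -/
import Mathlib

section
/- Let f : [a,b] → ℝ be C¹ with Df(x) ≥ c > 0 and suppose f has an absolutely continuous derivative with D²f ∈ L¹([a,b]). Then for a ≤ z2 < z3 ≤ b, |log((f(z3)-f(z2))/(z3-z2)) - log Df(z2)| ≤ (1/c) ∫_{z2}^{z3} |D²f(y)| dy. -/
open MeasureTheory intervalIntegral

lemma log_lip_aux {c x y : ℝ} (hc : 0 < c) (hx : c ≤ x) (hy : c ≤ y) :
    Real.log x - Real.log y ≤ |x - y| / c := by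
  have hx0 : 0 < x := lt_of_lt_of_le hc hx
  have hy0 : 0 < y := lt_of_lt_of_le hc hy
  have h1 : Real.log x - Real.log y = Real.log (x / y) := (Real.log_div hx0.ne' hy0.ne').symm
  rw [h1]
  have h2 : Real.log (x / y) ≤ x / y - 1 := Real.log_le_sub_one_of_pos (div_pos hx0 hy0)
  have h3 : x / y - 1 = (x - y) / y := by field_simp
  have h4 : (x - y) / y ≤ |x - y| / c := by
    apply div_le_div₀ (abs_nonneg _) (le_abs_self _) hc hy
  linarith

lemma log_lip {c x y : ℝ} (hc : 0 < c) (hx : c ≤ x) (hy : c ≤ y) :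
    |Real.log x - Real.log y| ≤ |x - y| / c := by
  rw [abs_sub_le_iff]
  constructor
  · exact log_lip_aux hc hx hy
  · rw [abs_sub_comm]; exact log_lip_aux hc hy hx

theorem log_slope_estimate (a b c : ℝ) (f f' f'' : ℝ → ℝ)
    (hab : a ≤ b) (hc : 0 < c)
    (hderiv : ∀ x ∈ Set.Icc a b, HasDerivWithinAt f (f' x) (Set.Icc a b) x)
    (hf'lb : ∀ x ∈ Set.Icc a b, c ≤ f' x)
    (hf''int : IntervalIntegrable f'' volume a b)
    (hAC : ∀ x ∈ Set.Icc a b, f' x = f' a + ∫ y in a..x, f'' y)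
    (z2 z3 : ℝ) (hz2 : a ≤ z2) (hz23 : z2 < z3) (hz3 : z3 ≤ b) :
    |Real.log ((f z3 - f z2) / (z3 - z2)) - Real.log (f' z2)| ≤
      (1 / c) * ∫ y in z2..z3, |f'' y| := by
  have hz2mem : z2 ∈ Set.Icc a b := ⟨hz2, le_trans hz23.le hz3⟩
  -- continuity of f on [z2,z3]
  have hcont : ContinuousOn f (Set.Icc z2 z3) := by
    intro x hx
    have hx' : x ∈ Set.Icc a b := ⟨le_trans hz2 hx.1, le_trans hx.2 hz3⟩
    exact ((hderiv x hx').continuousWithinAt).mono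
      (fun y hy => ⟨le_trans hz2 hy.1, le_trans hy.2 hz3⟩)
  -- differentiability inside
  have hderiv' : ∀ x ∈ Set.Ioo z2 z3, HasDerivAt f (f' x) x := by
    intro x hx
    have hx' : x ∈ Set.Icc a b := ⟨le_trans hz2 hx.1.le, le_trans hx.2.le hz3⟩
    apply (hderiv x hx').hasDerivAt
    exact Icc_mem_nhds (lt_of_le_of_lt hz2 hx.1) (lt_of_lt_of_le hx.2 hz3)
  obtain ⟨ξ, hξ, hξeq⟩ := exists_hasDerivAt_eq_slope f f' hz23 hcont hderiv'
  have hξmem : ξ ∈ Set.Icc a b := ⟨le_trans hz2 hξ.1.le, le_trans hξ.2.le hz3⟩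
  rw [show (f z3 - f z2) / (z3 - z2) = f' ξ from hξeq.symm]
  -- f' ξ - f' z2 = ∫ z2..ξ f''
  have hint1 : IntervalIntegrable f'' volume z2 ξ :=
    hf''int.mono_set (by
      rw [Set.uIcc_of_le hab, Set.uIcc_of_le hξ.1.le]
      exact Set.Icc_subset_Icc hz2 hξmem.2)
  have hdiff : f' ξ - f' z2 = ∫ y in z2..ξ, f'' y := by
    rw [hAC ξ hξmem, hAC z2 hz2mem]
    rw [← intervalIntegral.integral_add_adjacent_intervals
      (hf''int.mono_set (by
        rw [Set.uIcc_of_le hab, Set.uIcc_of_le hz2]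
        exact Set.Icc_subset_Icc le_rfl hz2mem.2)) hint1]
    ring
  have habsint : IntervalIntegrable (fun y => |f'' y|) volume z2 z3 :=
    (hf''int.mono_set (by
      rw [Set.uIcc_of_le hab, Set.uIcc_of_le hz23.le]
      exact Set.Icc_subset_Icc hz2 hz3)).abs
  have hbound : |f' ξ - f' z2| ≤ ∫ y in z2..z3, |f'' y| := by
    rw [hdiff]
    calc |∫ y in z2..ξ, f'' y| ≤ ∫ y in z2..ξ, |f'' y| :=
          intervalIntegral.abs_integral_le_integral_abs hξ.1.le
      _ ≤ ∫ y in z2..z3, |f'' y| := by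
          apply intervalIntegral.integral_mono_interval (le_refl z2) hξ.1.le hξ.2.le
          · filter_upwards with y using abs_nonneg _
          · exact habsint
  calc |Real.log (f' ξ) - Real.log (f' z2)| ≤ |f' ξ - f' z2| / c :=
        log_lip hc (hf'lb ξ hξmem) (hf'lb z2 hz2mem)
    _ ≤ (∫ y in z2..z3, |f'' y|) / c := by
        gcongr
    _ = (1 / c) * ∫ y in z2..z3, |f'' y| := by ring
end

section
/- Let φ : ℝ → ℝ be differentiable at x0 with φ'(x0) = ω > 0. For every ε > 0 there is δ > 0 such that for all points z1 < z2 < z3 < z4 in (x0-δ, x0+δ) satisfying (a) the lengths |z2-z1|, |z3-z2|, |z4-z3| are pairwise comparable with constant R1 > 1, and (b) max_i |z_i - x0| ≤ R1·|z2-z1|, one has |Dist(z1,z2,z3,z4; φ) - 1| ≤ C·ε, where C depends only on R1 and ω. -/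
lemma aux_ratio (a b c d t : ℝ) (ht : t ≤ 1/4) (ht0 : 0 ≤ t)
    (ha : |a-1| ≤ t) (hb : |b-1| ≤ t) (hc : |c-1| ≤ t) (hd : |d-1| ≤ t) :
    |a*b/(c*d) - 1| ≤ 8*t := by
  rw [abs_le] at ha hb hc hd
  have hc0 : (0:ℝ) < c := by linarith [hc.1]
  have hd0 : (0:ℝ) < d := by linarith [hd.1]
  have hcd : (0:ℝ) < c*d := mul_pos hc0 hd0
  have key : a*b/(c*d) - 1 = (a*b - c*d)/(c*d) := by field_simp
  have hA : 0 ≤ (a-(1-t))*(b-(1-t)) := mul_nonneg (by linarith [ha.1]) (by linarith [hb.1])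
  have hB : 0 ≤ ((1+t)-a)*((1+t)-b) := mul_nonneg (by linarith [ha.2]) (by linarith [hb.2])
  have hC : 0 ≤ (c-(1-t))*(d-(1-t)) := mul_nonneg (by linarith [hc.1]) (by linarith [hd.1])
  have hD : 0 ≤ ((1+t)-c)*((1+t)-d) := mul_nonneg (by linarith [hc.2]) (by linarith [hd.2])
  have hE : 0 ≤ t*(1/4 - t) := mul_nonneg ht0 (by linarith)
  have hF : 0 ≤ t*t*(1/4 - t) := mul_nonneg (mul_nonneg ht0 ht0) (by linarith)
  rw [key, abs_le]
  constructor
  · rw [le_div_iff₀ hcd]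
    nlinarith [ha.1, ha.2, hb.1, hb.2, hc.1, hc.2, hd.1, hd.2]
  · rw [div_le_iff₀ hcd]
    nlinarith [ha.1, ha.2, hb.1, hb.2, hc.1, hc.2, hd.1, hd.2]

lemma crdist_formula (A B C D d21 d43 d31 d42 om : ℝ) (hom : om ≠ 0)
    (h21 : d21 ≠ 0) (h43 : d43 ≠ 0) (h31 : d31 ≠ 0) (h42 : d42 ≠ 0)
    (hC : C ≠ 0) (hD : D ≠ 0) :
    (A*B/(C*D)) / ((d21*d43)/(d31*d42))
      = (A/(om*d21) * (B/(om*d43))) / (C/(om*d31) * (D/(om*d42))) := by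
  field_simp

noncomputable def Cr (z1 z2 z3 z4 : ℝ) : ℝ :=
  ((z2 - z1) * (z4 - z3)) / ((z3 - z1) * (z4 - z2))

noncomputable def CrDist (f : ℝ → ℝ) (z1 z2 z3 z4 : ℝ) : ℝ :=
  Cr (f z1) (f z2) (f z3) (f z4) / Cr z1 z2 z3 z4

theorem dist_close_to_one_near_differentiability_point
    (φ : ℝ → ℝ) (x0 ω : ℝ) (hφ : HasDerivAt φ ω x0) (hω : 0 < ω) :
    ∀ R1 > (1 : ℝ), ∃ C > (0 : ℝ), ∀ ε > (0 : ℝ), ∃ δ > (0 : ℝ),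
      ∀ z1 z2 z3 z4 : ℝ,
        z1 ∈ Set.Ioo (x0 - δ) (x0 + δ) → z2 ∈ Set.Ioo (x0 - δ) (x0 + δ) →
        z3 ∈ Set.Ioo (x0 - δ) (x0 + δ) → z4 ∈ Set.Ioo (x0 - δ) (x0 + δ) →
        z1 < z2 → z2 < z3 → z3 < z4 →
        R1⁻¹ * (z3 - z2) ≤ z2 - z1 → z2 - z1 ≤ R1 * (z3 - z2) →
        R1⁻¹ * (z3 - z2) ≤ z4 - z3 → z4 - z3 ≤ R1 * (z3 - z2) →
        |z1 - x0| ≤ R1 * (z2 - z1) → |z2 - x0| ≤ R1 * (z2 - z1) →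
        |z3 - x0| ≤ R1 * (z2 - z1) → |z4 - x0| ≤ R1 * (z2 - z1) →
        |CrDist φ z1 z2 z3 z4 - 1| ≤ C * ε := by
  intro R1 hR1
  refine ⟨2, two_pos, ?_⟩
  intro ε hε
  have hR0 : (0:ℝ) < R1 := by linarith
  have hm : (0:ℝ) < min ε 1 := lt_min hε one_pos
  set ε' := min ε 1 * ω / (8 * R1^3) with hε'def
  have hε'pos : 0 < ε' := div_pos (mul_pos hm hω) (by positivity)
  have hev := (hasDerivAt_iff_isLittleO.mp hφ).bound hε'pos
  rw [Metric.eventually_nhds_iff] at hev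
  obtain ⟨δ, hδ, hb⟩ := hev
  refine ⟨δ, hδ, ?_⟩
  intro z1 z2 z3 z4 h1 h2 h3 h4 h12 h23 h34 c1 c2 c3 c4 m1 m2 m3 m4
  set t := min ε 1 / 4 with htdef
  have ht0 : 0 ≤ t := by positivity
  have ht : t ≤ 1/4 := by
    have : min ε 1 ≤ 1 := min_le_right _ _
    rw [htdef]; linarith
  set S := z2 - z1 with hSdef
  have hS : 0 < S := by rw [hSdef]; linarith
  have hdist : ∀ z, z ∈ Set.Ioo (x0-δ) (x0+δ) → dist z x0 < δ := by
    intro z hz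
    rw [Real.dist_eq, abs_lt]
    exact ⟨by linarith [hz.1], by linarith [hz.2]⟩
  have hrb : ∀ z, dist z x0 < δ → |φ z - φ x0 - (z - x0)*ω| ≤ ε' * |z - x0| := by
    intro z hz
    have := hb hz
    simpa [Real.norm_eq_abs, smul_eq_mul] using this
  -- bound for each pair
  have pair : ∀ zi zj : ℝ, dist zi x0 < δ → dist zj x0 < δ →
      |zi - x0| ≤ R1*S → |zj - x0| ≤ R1*S → S/R1^2 ≤ zj - zi →
      |(φ zj - φ zi)/(ω*(zj - zi)) - 1| ≤ t := by
    intro zi zj hdi hdj hmi hmj hgap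
    have hdpos : 0 < zj - zi := lt_of_lt_of_le (by positivity) hgap
    have hri := hrb zi hdi
    have hrj := hrb zj hdj
    have hri' : |φ zi - φ x0 - (zi - x0)*ω| ≤ ε' * (R1*S) :=
      hri.trans (mul_le_mul_of_nonneg_left hmi hε'pos.le)
    have hrj' : |φ zj - φ x0 - (zj - x0)*ω| ≤ ε' * (R1*S) :=
      hrj.trans (mul_le_mul_of_nonneg_left hmj hε'pos.le)
    have hnum : |φ zj - φ zi - ω*(zj - zi)| ≤ 2 * (ε' * (R1 * S)) := by
      have hid : φ zj - φ zi - ω*(zj - zi)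
          = (φ zj - φ x0 - (zj - x0)*ω) - (φ zi - φ x0 - (zi - x0)*ω) := by ring
      rw [hid]
      calc |(φ zj - φ x0 - (zj - x0)*ω) - (φ zi - φ x0 - (zi - x0)*ω)|
          ≤ |φ zj - φ x0 - (zj - x0)*ω| + |φ zi - φ x0 - (zi - x0)*ω| := abs_sub _ _
        _ ≤ 2 * (ε' * (R1*S)) := by linarith
    have hωd : 0 < ω * (zj - zi) := mul_pos hω hdpos
    have hkey : (φ zj - φ zi)/(ω*(zj - zi)) - 1
        = (φ zj - φ zi - ω*(zj - zi))/(ω*(zj - zi)) := by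
      field_simp
    rw [hkey, abs_div, abs_of_pos hωd, div_le_iff₀ hωd]
    calc |φ zj - φ zi - ω*(zj - zi)| ≤ 2 * (ε' * (R1 * S)) := hnum
      _ = t * (ω * (S/R1^2)) := by
          rw [hε'def, htdef]; field_simp; ring
      _ ≤ t * (ω * (zj - zi)) :=
          mul_le_mul_of_nonneg_left (mul_le_mul_of_nonneg_left hgap hω.le) ht0
  -- gap facts
  have hR2 : (1:ℝ) ≤ R1^2 := by nlinarith
  have h32 : S/R1 ≤ z3 - z2 := by
    rw [div_le_iff₀ hR0]; nlinarith [c2]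
  have g21 : S/R1^2 ≤ z2 - z1 := by
    have := div_le_self hS.le hR2
    rw [hSdef] at this ⊢; linarith
  have g31 : S/R1^2 ≤ z3 - z1 := by
    have := div_le_self hS.le hR2
    rw [hSdef] at this ⊢; linarith
  have g42 : S/R1^2 ≤ z4 - z2 := by
    have hh : S/R1^2 ≤ S/R1 := by
      rw [div_le_div_iff₀ (by positivity) hR0]
      nlinarith [mul_nonneg (mul_nonneg hS.le hR0.le) (by linarith : (0:ℝ) ≤ R1 - 1)]
    rw [hSdef] at hh h32 ⊢; linarith
  have g43 : S/R1^2 ≤ z4 - z3 := by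
    have key : S/R1^2 = R1⁻¹ * (S/R1) := by
      rw [sq, ← div_div, div_eq_inv_mul]
    have hh : S/R1^2 ≤ R1⁻¹ * (z3 - z2) := by
      rw [key]
      exact mul_le_mul_of_nonneg_left h32 (by positivity)
    linarith [c3]
  -- the four ratios
  have u21 := pair z1 z2 (hdist z1 h1) (hdist z2 h2) m1 m2 g21
  have u43 := pair z3 z4 (hdist z3 h3) (hdist z4 h4) m3 m4 g43
  have u31 := pair z1 z3 (hdist z1 h1) (hdist z3 h3) m1 m3 g31
  have u42 := pair z2 z4 (hdist z2 h2) (hdist z4 h4) m2 m4 g42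
  have d21 : (0:ℝ) < z2 - z1 := by linarith
  have d43 : (0:ℝ) < z4 - z3 := by linarith
  have d31 : (0:ℝ) < z3 - z1 := by linarith
  have d42 : (0:ℝ) < z4 - z2 := by linarith
  have upos : ∀ w u : ℝ, 0 < w → |u/w - 1| ≤ t → (0:ℝ) < u := by
    intro w u hw hu
    rw [abs_le] at hu
    have h1' : (0:ℝ) < u/w := by linarith [hu.1]
    exact (div_pos_iff.mp h1').resolve_right (fun h => absurd h.2 (by linarith)) |>.1
  have p31 : 0 < φ z3 - φ z1 := upos _ _ (mul_pos hω d31) u31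
  have p42 : 0 < φ z4 - φ z2 := upos _ _ (mul_pos hω d42) u42
  have hEq : CrDist φ z1 z2 z3 z4 =
      ((φ z2 - φ z1)/(ω*(z2 - z1)) * ((φ z4 - φ z3)/(ω*(z4 - z3)))) /
      ((φ z3 - φ z1)/(ω*(z3 - z1)) * ((φ z4 - φ z2)/(ω*(z4 - z2)))) := by
    simp only [CrDist, Cr]
    exact crdist_formula _ _ _ _ _ _ _ _ _ hω.ne' d21.ne' d43.ne' d31.ne' d42.ne'
      p31.ne' p42.ne'
  rw [hEq]
  have hfinal := aux_ratio _ _ _ _ t ht ht0 u21 u43 u31 u42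
  calc |(φ z2 - φ z1)/(ω*(z2 - z1)) * ((φ z4 - φ z3)/(ω*(z4 - z3))) /
      ((φ z3 - φ z1)/(ω*(z3 - z1)) * ((φ z4 - φ z2)/(ω*(z4 - z2)))) - 1| ≤ 8*t := hfinal
    _ = 2 * min ε 1 := by rw [htdef]; ring
    _ ≤ 2 * ε := by
        have := min_le_left ε 1
        linarith
end

section
/- Let f : ℝ → ℝ be a lift of a circle homeomorphism (continuous, strictly increasing, f(x+1) = f(x)+1) that is differentiable except at finitely many points, with c1 ≤ Df ≤ c2 for constants 0 < c1 < c2, and let v = Var(log Df) < ∞. Suppose x, y ∈ S¹ are such that the open intervals Tᶦ(x,y), 0 ≤ i < q, are pairwise disjoint and avoid the break points. Then for every 0 ≤ l ≤ q: e^{-v} ≤ Df^l(x)/Df^l(y) ≤ e^v, where Df^l denotes the derivative of the l-th iterate (the product of Df along the orbit). -/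
/-!
Write `g = log D`. By the chain rule, `log (Df^l(x) / Df^l(y)) = ∑_{s<l} (g (Tˢ x) - g (Tˢ y))`.
Each summand is bounded by the oscillation of `g` on the interval between `Tˢ x` and `Tˢ y`;
since these `l` intervals are pairwise disjoint subintervals of `[0, 1]`, the sum of these
oscillations is at most the total variation of `g`, hence at most `v`.
-/

open Set

section Variation

variable {α E ι : Type*} [LinearOrder α] [DenselyOrdered α] [PseudoEMetricSpace E]

theorem sum_edist_le_eVariationOn_of_pairwiseDisjoint_Ioo [DecidableEq ι] (g : α → E)
    {s : Set α} (S : Finset ι) {a b : ι → α} (hab : ∀ i ∈ S, a i < b i)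
    (has : ∀ i ∈ S, a i ∈ s) (hbs : ∀ i ∈ S, b i ∈ s)
    (hdisj : (S : Set ι).PairwiseDisjoint fun i => Ioo (a i) (b i)) :
    ∑ i ∈ S, edist (g (a i)) (g (b i)) ≤ eVariationOn g s := by
  induction S using Finset.induction_on_max_value b generalizing s with
  | empty => simp
  | insert t S htS hmax ih =>
    simp only [Finset.mem_insert, forall_eq_or_imp] at hab has hbs
    have hleft : ∀ i ∈ S, b i ≤ a t := fun i hi => by
      have hd := hdisj (by simp) (by simp [hi]) (ne_of_mem_of_not_mem hi htS).symm
      rw [Function.onFun, Ioo_disjoint_Ioo, min_eq_right (hmax i hi), le_max_iff] at hd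
      exact hd.resolve_right (hab.2 i hi).not_ge
    have hS : ∑ i ∈ S, edist (g (a i)) (g (b i)) ≤ eVariationOn g (s ∩ Iic (a t)) :=
      ih hab.2
        (fun i hi => ⟨has.2 i hi, ((hab.2 i hi).trans_le (hleft i hi)).le⟩)
        (fun i hi => ⟨hbs.2 i hi, hleft i hi⟩)
        (hdisj.subset (by simp))
    have ht : edist (g (a t)) (g (b t)) ≤ eVariationOn g (s ∩ Ici (a t)) :=
      eVariationOn.edist_le g ⟨has.1, le_rfl⟩ ⟨hbs.1, hab.1.le⟩
    calc ∑ i ∈ insert t S, edist (g (a i)) (g (b i))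
        = ∑ i ∈ S, edist (g (a i)) (g (b i)) + edist (g (a t)) (g (b t)) := by
          rw [Finset.sum_insert htS, add_comm]
      _ ≤ eVariationOn g (s ∩ Iic (a t)) + eVariationOn g (s ∩ Ici (a t)) := add_le_add hS ht
      _ ≤ eVariationOn g (s ∩ Iic (a t) ∪ s ∩ Ici (a t)) :=
          eVariationOn.add_le_union g fun x hx y hy => hx.2.trans hy.2
      _ ≤ eVariationOn g s := eVariationOn.mono g (union_subset inter_subset_left inter_subset_left)

theorem sum_edist_le_eVariationOn_of_pairwiseDisjoint_uIoo (g : α → E) {s : Set α}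
    (S : Finset ι) {u w : ι → α} (hus : ∀ i ∈ S, u i ∈ s) (hws : ∀ i ∈ S, w i ∈ s)
    (hdisj : (S : Set ι).PairwiseDisjoint fun i => uIoo (u i) (w i)) :
    ∑ i ∈ S, edist (g (u i)) (g (w i)) ≤ eVariationOn g s := by
  classical
  set S' := S.filter fun i => u i ≠ w i
  have hS' : ∑ i ∈ S', edist (g (u i)) (g (w i)) = ∑ i ∈ S, edist (g (u i)) (g (w i)) :=
    Finset.sum_filter_of_ne fun i _ hne heq => hne (by rw [heq, edist_self])
  have hminmax : ∀ i, edist (g (u i)) (g (w i)) = edist (g (u i ⊓ w i)) (g (u i ⊔ w i)) := by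
    intro i
    rcases le_total (u i) (w i) with h | h
    · simp [h]
    · simp [h, edist_comm]
  rw [← hS', Finset.sum_congr rfl fun i _ => hminmax i]
  exact sum_edist_le_eVariationOn_of_pairwiseDisjoint_Ioo g S'
    (fun i hi => inf_lt_sup.2 (Finset.mem_filter.1 hi).2)
    (fun i hi => min_rec' (· ∈ s) (hus i (Finset.mem_of_mem_filter i hi))
      (hws i (Finset.mem_of_mem_filter i hi)))
    (fun i hi => max_rec' (· ∈ s) (hus i (Finset.mem_of_mem_filter i hi))
      (hws i (Finset.mem_of_mem_filter i hi)))
    (hdisj.subset (Finset.coe_subset.2 (Finset.filter_subset _ _)))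

end Variation

theorem Real.exp_neg_le_and_le_exp_of_abs_log_le {r v : ℝ} (hr : 0 < r) (h : |Real.log r| ≤ v) :
    Real.exp (-v) ≤ r ∧ r ≤ Real.exp v :=
  ⟨(Real.le_log_iff_exp_le hr).1 (neg_le_of_abs_le h),
    (Real.log_le_iff_le_exp hr).1 (le_of_abs_le h)⟩

theorem Real.log_prod_div_prod {ι : Type*} (S : Finset ι) {a b : ι → ℝ}
    (ha : ∀ i ∈ S, 0 < a i) (hb : ∀ i ∈ S, 0 < b i) :
    Real.log ((∏ i ∈ S, a i) / ∏ i ∈ S, b i) = ∑ i ∈ S, (Real.log (a i) - Real.log (b i)) := by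
  rw [Real.log_div (Finset.prod_pos ha).ne' (Finset.prod_pos hb).ne',
    Real.log_prod fun i hi => (ha i hi).ne', Real.log_prod fun i hi => (hb i hi).ne',
    Finset.sum_sub_distrib]

theorem denjoy_ratio_estimate_general
    (f : ℝ → ℝ)
    (D : ℝ → ℝ)
    (c1 c2 : ℝ) (hc1 : 0 < c1)
    (hDbound : ∀ x, c1 ≤ D x ∧ D x ≤ c2)
    (v : ℝ) (hv0 : 0 ≤ v)
    (hvar : eVariationOn (fun x => Real.log (D x)) (Set.Icc 0 1) ≤ ENNReal.ofReal v)
    (T : ℝ → ℝ) (hT : T = fun x => Int.fract (f x))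
    (x y : ℝ) (hx : x ∈ Set.Ico (0:ℝ) 1) (hy : y ∈ Set.Ico (0:ℝ) 1)
    (q : ℕ)
    (hdisj : ∀ i < q, ∀ j < q, i ≠ j →
      Disjoint (Set.uIoo (T^[i] x) (T^[i] y)) (Set.uIoo (T^[j] x) (T^[j] y))) :
    ∀ l ≤ q,
      Real.exp (-v) ≤
          (∏ s ∈ Finset.range l, D (T^[s] x)) / (∏ s ∈ Finset.range l, D (T^[s] y)) ∧
        (∏ s ∈ Finset.range l, D (T^[s] x)) / (∏ s ∈ Finset.range l, D (T^[s] y)) ≤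
          Real.exp v := by
  intro l hl
  have hD : ∀ z, 0 < D z := fun z => hc1.trans_le (hDbound z).1
  have horbit : ∀ n, MapsTo T^[n] (Ico 0 1) (Icc 0 1) := fun n =>
    (MapsTo.iterate (fun z _ => hT ▸ ⟨Int.fract_nonneg _, Int.fract_lt_one _⟩) n).mono_right
      Ico_subset_Icc_self
  have hvar_orbit : ∑ s ∈ Finset.range l,
      edist (Real.log (D (T^[s] x))) (Real.log (D (T^[s] y))) ≤ ENNReal.ofReal v :=
    (sum_edist_le_eVariationOn_of_pairwiseDisjoint_uIoo (fun z => Real.log (D z)) _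
      (fun s _ => horbit s hx) (fun s _ => horbit s hy)
      fun i hi j hj hij => hdisj i (by simp at hi; omega) j (by simp at hj; omega) hij).trans hvar
  simp only [edist_dist, Real.dist_eq] at hvar_orbit
  rw [← ENNReal.ofReal_sum_of_nonneg fun _ _ => abs_nonneg _,
    ENNReal.ofReal_le_ofReal_iff hv0] at hvar_orbit
  refine Real.exp_neg_le_and_le_exp_of_abs_log_le
    (div_pos (Finset.prod_pos fun _ _ => hD _) (Finset.prod_pos fun _ _ => hD _)) ?_
  rw [Real.log_prod_div_prod _ (fun _ _ => hD _) fun _ _ => hD _]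
  exact (Finset.abs_sum_le_sum_abs _ _).trans hvar_orbit

/-- Lemma 2.2: for a P-homeomorphism whose lift has derivative `D` with
`c1 ≤ D ≤ c2` and `Var(log D) ≤ v`, if the orbit intervals of a pair of
points are pairwise disjoint and avoid the break points, then the ratio of
the derivatives of the iterates is bounded by `e^{±v}`. -/
theorem denjoy_ratio_estimate
    (f : ℝ → ℝ) (hfc : Continuous f) (hfm : StrictMono f)
    (hper : ∀ x, f (x + 1) = f x + 1)
    (B : Finset ℝ) (D : ℝ → ℝ)
    (hD : ∀ x, (∀ b ∈ B, ∀ k : ℤ, x ≠ b + k) → HasDerivAt f (D x) x)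
    (c1 c2 : ℝ) (hc1 : 0 < c1) (hc12 : c1 < c2)
    (hDbound : ∀ x, c1 ≤ D x ∧ D x ≤ c2)
    (hDper : ∀ x, D (x + 1) = D x)
    (v : ℝ) (hv0 : 0 ≤ v)
    (hvar : eVariationOn (fun x => Real.log (D x)) (Set.Icc 0 1) ≤ ENNReal.ofReal v)
    (T : ℝ → ℝ) (hT : T = fun x => Int.fract (f x))
    (x y : ℝ) (hx : x ∈ Set.Ico (0:ℝ) 1) (hy : y ∈ Set.Ico (0:ℝ) 1)
    (q : ℕ)
    (hdisj : ∀ i < q, ∀ j < q, i ≠ j →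
      Disjoint (Set.uIoo (T^[i] x) (T^[i] y)) (Set.uIoo (T^[j] x) (T^[j] y)))
    (hbreak : ∀ i < q, ∀ b ∈ B, ∀ k : ℤ, (b + k : ℝ) ∉ Set.uIcc (T^[i] x) (T^[i] y)) :
    ∀ l ≤ q,
      Real.exp (-v) ≤
          (∏ s ∈ Finset.range l, D (T^[s] x)) / (∏ s ∈ Finset.range l, D (T^[s] y)) ∧
        (∏ s ∈ Finset.range l, D (T^[s] x)) / (∏ s ∈ Finset.range l, D (T^[s] y)) ≤
          Real.exp v :=
  denjoy_ratio_estimate_general f D c1 c2 hc1 hDbound v hv0 hvar T hT x y hx hy q hdisj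
end

section
/- Let f be strictly increasing on [z1,z4], differentiable on [z1,z4] \ {xb} with one-sided derivatives Df₋(xb), Df₊(xb) > 0 at xb ∈ (z1,z2), and suppose f is affine on [z1,xb] with slope Df₋(xb) and affine on [xb,z4] with slope Df₊(xb). Set σ = Df₋(xb)/Df₊(xb), α = z2-z1, β = z3-z2, ξ = β/α, τ = z2-xb, z = τ/α. Then Dist(z1,z2,z3,z4; f) = ((σ + (1-σ)z)(1+ξ))/(σ + (1-σ)z + ξ). -/
theorem dist_piecewise_linear_break_in_left_interval
    (f : ℝ → ℝ) (z1 z2 z3 z4 xb sm sp : ℝ)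
    (h12 : z1 < z2) (h23 : z2 < z3) (h34 : z3 < z4)
    (hxb1 : z1 < xb) (hxb2 : xb < z2)
    (hsm : 0 < sm) (hsp : 0 < sp)
    (hleft : ∀ x ∈ Set.Icc z1 xb, f x = f xb + sm * (x - xb))
    (hright : ∀ x ∈ Set.Icc xb z4, f x = f xb + sp * (x - xb)) :
    CrDist f z1 z2 z3 z4 =
      ((sm / sp + (1 - sm / sp) * ((z2 - xb) / (z2 - z1))) *
          (1 + (z3 - z2) / (z2 - z1))) /
        (sm / sp + (1 - sm / sp) * ((z2 - xb) / (z2 - z1)) +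
          (z3 - z2) / (z2 - z1)) := by
  have hf1 : f z1 = f xb + sm * (z1 - xb) :=
    hleft z1 ⟨le_refl _, hxb1.le⟩
  have hf2 : f z2 = f xb + sp * (z2 - xb) :=
    hright z2 ⟨hxb2.le, by linarith⟩
  have hf3 : f z3 = f xb + sp * (z3 - xb) :=
    hright z3 ⟨by linarith, by linarith⟩
  have hf4 : f z4 = f xb + sp * (z4 - xb) :=
    hright z4 ⟨by linarith, le_refl _⟩
  have h1 : (0:ℝ) < z2 - z1 := by linarith
  have h2 : (0:ℝ) < z3 - z1 := by linarith
  have h3 : (0:ℝ) < z4 - z2 := by linarith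
  have h4 : (0:ℝ) < z4 - z3 := by linarith
  have h5 : (0:ℝ) < z3 - z2 := by linarith
  have hfa : (0:ℝ) < sm * (xb - z1) + sp * (z2 - xb) := by nlinarith
  have hfb : (0:ℝ) < sm * (xb - z1) + sp * (z3 - xb) := by nlinarith
  have hden : (0:ℝ) < sm * (z2 - xb) + sp * (z3 - z2) + sm * (xb - z1) := by nlinarith
  have e21 : f z2 - f z1 = sm * (xb - z1) + sp * (z2 - xb) := by rw [hf1, hf2]; ring
  have e43 : f z4 - f z3 = sp * (z4 - z3) := by rw [hf3, hf4]; ring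
  have e31 : f z3 - f z1 = sm * (xb - z1) + sp * (z3 - xb) := by rw [hf1, hf3]; ring
  have e42 : f z4 - f z2 = sp * (z4 - z2) := by rw [hf2, hf4]; ring
  have hY : (0:ℝ) < sm / sp + (1 - sm / sp) * ((z2 - xb) / (z2 - z1)) + (z3 - z2) / (z2 - z1) := by
    have h : sm / sp + (1 - sm / sp) * ((z2 - xb) / (z2 - z1)) + (z3 - z2) / (z2 - z1)
        = (sm * (xb - z1) + sp * (z2 - xb) + sp * (z3 - z2)) / (sp * (z2 - z1)) := by
      field_simp; ring
    rw [h]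
    apply div_pos (by nlinarith) (by positivity)
  unfold CrDist Cr
  rw [e21, e43, e31, e42]
  rw [div_div_eq_mul_div, div_mul_eq_mul_div, div_div]
  rw [div_eq_div_iff (by positivity) hY.ne']
  field_simp
  ring
end

section
/- Let f be piecewise linear on [z1,z4] with a single break point at xb = z2, with left slope Df₋ and right slope Df₊ and σ = Df₋/Df₊ > 0. Then Dist(z1,z2,z3,z4; f) = σ(1+ξ)/(σ+ξ) where ξ = (z3-z2)/(z2-z1). In particular if σ ≠ 1 and R⁻¹ ≤ ξ ≤ R for some R > 1, then |Dist(z1,z2,z3,z4; f) - 1| ≥ |σ-1|·R⁻¹/(σ + R) > 0. -/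
theorem dist_piecewise_linear_break_at_z2
    (f : ℝ → ℝ) (z1 z2 z3 z4 sm sp : ℝ)
    (h12 : z1 < z2) (h23 : z2 < z3) (h34 : z3 < z4)
    (hsm : 0 < sm) (hsp : 0 < sp)
    (hleft : ∀ x ∈ Set.Icc z1 z2, f x = f z2 + sm * (x - z2))
    (hright : ∀ x ∈ Set.Icc z2 z4, f x = f z2 + sp * (x - z2)) :
    CrDist f z1 z2 z3 z4 =
      (sm / sp) * (1 + (z3 - z2) / (z2 - z1)) /
        (sm / sp + (z3 - z2) / (z2 - z1)) ∧
    (∀ R : ℝ, 1 < R → sm / sp ≠ 1 →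
      R⁻¹ ≤ (z3 - z2) / (z2 - z1) → (z3 - z2) / (z2 - z1) ≤ R →
      |CrDist f z1 z2 z3 z4 - 1| ≥ |sm / sp - 1| * R⁻¹ / (sm / sp + R) ∧
      0 < |sm / sp - 1| * R⁻¹ / (sm / sp + R)) := by
  have hz1 : f z1 = f z2 + sm * (z1 - z2) := hleft z1 ⟨le_refl _, h12.le⟩
  have hz3 : f z3 = f z2 + sp * (z3 - z2) := hright z3 ⟨h23.le, h34.le⟩
  have hz4 : f z4 = f z2 + sp * (z4 - z2) := hright z4 ⟨(h23.trans h34).le, le_refl _⟩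
  have ha0 : (0:ℝ) < z2 - z1 := by linarith
  have hb0 : (0:ℝ) < z3 - z2 := by linarith
  have hc0 : (0:ℝ) < z4 - z3 := by linarith
  have h31 : (0:ℝ) < z3 - z1 := by linarith
  have h42 : (0:ℝ) < z4 - z2 := by linarith
  have hden : (0:ℝ) < sp * (z3 - z2) + sm * (z2 - z1) := by positivity
  have ha0' := ha0.ne'
  have hb0' := hb0.ne'
  have hc0' := hc0.ne'
  have h31' := h31.ne'
  have h42' := h42.ne'
  have hden' := hden.ne'
  have hsp' := hsp.ne'
  have hsm' := hsm.ne'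
  set ξ := (z3 - z2) / (z2 - z1) with hξdef
  have hξ0 : 0 < ξ := div_pos hb0 ha0
  set σ := sm / sp with hσdef
  have hσ0 : 0 < σ := div_pos hsm hsp
  have hσξ : 0 < σ + ξ := by positivity
  have hNum : Cr (f z1) (f z2) (f z3) (f z4) =
      (sm * (z2 - z1)) * (sp * (z4 - z3)) /
        ((sp * (z3 - z2) + sm * (z2 - z1)) * (sp * (z4 - z2))) := by
    unfold Cr
    rw [hz1, hz3, hz4]
    congr 1 <;> ring
  have hCr : Cr z1 z2 z3 z4 = ((z2 - z1) * (z4 - z3)) / ((z3 - z1) * (z4 - z2)) := rfl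
  have hmain : CrDist f z1 z2 z3 z4 = σ * (1 + ξ) / (σ + ξ) := by
    unfold CrDist
    rw [hNum, hCr, hσdef, hξdef]
    field_simp
    ring
  refine ⟨hmain, ?_⟩
  intro R hR hσ1 hRξ hξR
  have hR0 : (0:ℝ) < R := by linarith
  have hRi : (0:ℝ) < R⁻¹ := by positivity
  have hRR : R⁻¹ * R = 1 := inv_mul_cancel₀ hR0.ne'
  have habs : 0 < |σ - 1| := abs_pos.mpr (sub_ne_zero.mpr hσ1)
  have hσR : 0 < σ + R := by positivity
  have hDm1 : CrDist f z1 z2 z3 z4 - 1 = (σ - 1) * ξ / (σ + ξ) := by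
    rw [hmain]
    field_simp
    ring
  have habsD : |CrDist f z1 z2 z3 z4 - 1| = |σ - 1| * ξ / (σ + ξ) := by
    rw [hDm1, abs_div, abs_mul, abs_of_pos hξ0, abs_of_pos hσξ]
  constructor
  · rw [habsD, ge_iff_le, div_le_div_iff₀ hσR hσξ]
    have key : R⁻¹ * (σ + ξ) ≤ ξ * (σ + R) := by nlinarith
    calc |σ - 1| * R⁻¹ * (σ + ξ) = |σ - 1| * (R⁻¹ * (σ + ξ)) := by ring
      _ ≤ |σ - 1| * (ξ * (σ + R)) := by
          exact mul_le_mul_of_nonneg_left key habs.le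
      _ = |σ - 1| * ξ * (σ + R) := by ring
  · positivity
end
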